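/- arXiv:1705.00572 — 4 statements merged into one kernel-verified Lean document; each statement's English description precedes it below -/
import Mathlib

section
/- Let A be a unital C*-algebra with a faithful state f. Then for every positive element y of A, the C*-norm of y equals the supremum over nonzero elements b of A of |f(b* y b)| / f(b* b). -/
/-!
Since `y ≤ ‖y‖`, every conjugate satisfies `b⋆ y b ≤ ‖y‖ b⋆ b`, and positivity of `f` bounds each
quotient by `‖y‖`. Conversely `‖y‖` lies in the spectrum of `y`, so for `c < ‖y‖` the element
`b = (y - c)₊` of the continuous functional calculus is nonzero and satisfies `b⋆ y b ≥ c b⋆ b`;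
faithfulness makes `f (b⋆ b) > 0`, so the quotient at `b` is at least `c`.
-/

open scoped ComplexOrder

lemma monotone_of_map_star_mul_self_nonneg {R B F : Type*} [NonUnitalRing R] [StarRing R]
    [PartialOrder R] [StarOrderedRing R] [AddCommGroup B] [PartialOrder B] [IsOrderedAddMonoid B]
    [FunLike F R B] [AddMonoidHomClass F R B] {f : F} (hf : ∀ a, 0 ≤ f (star a * a)) :
    Monotone f := by
  have hnonneg : ∀ d, 0 ≤ d → 0 ≤ f d := fun d hd ↦ by
    rw [StarOrderedRing.nonneg_iff] at hd
    induction hd using AddSubmonoid.closure_induction with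
    | mem _ h => obtain ⟨a, rfl⟩ := h; exact hf a
    | zero => simp
    | add _ _ _ _ hu hv => rw [map_add]; exact add_nonneg hu hv
  intro x z hxz
  simpa using hnonneg _ (sub_nonneg.mpr hxz)

lemma CStarAlgebra.exists_ne_zero_smul_star_mul_self_le_conjugate {A : Type*} [CStarAlgebra A]
    [PartialOrder A] [StarOrderedRing A] {y : A} (hy : IsSelfAdjoint y) {c t : ℝ}
    (ht : t ∈ spectrum ℝ y) (hct : c < t) :
    ∃ b : A, b ≠ 0 ∧ c • (star b * b) ≤ star b * y * b := by
  set h : ℝ → ℝ := fun s ↦ max (s - c) 0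
  have hh : Continuous h := by fun_prop
  refine ⟨cfc h y, fun hb ↦ ?_, ?_⟩
  · rw [← cfc_zero ℝ y] at hb
    have := eqOn_of_cfc_eq_cfc hb hh.continuousOn continuousOn_const hy ht
    simp only [h, Pi.zero_apply, max_eq_right_iff, sub_nonpos] at this
    linarith
  · have hconj : cfc h y * y * cfc h y - c • (cfc h y * cfc h y) =
        cfc (fun s ↦ h s * s * h s - c * (h s * h s)) y := by
      rw [cfc_sub _ _ y (by fun_prop) (by fun_prop), cfc_mul _ _ y (by fun_prop) (by fun_prop),
        cfc_mul _ _ y (by fun_prop) (by fun_prop), cfc_id' ℝ y,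
        cfc_const_mul _ _ y (by fun_prop), cfc_mul _ _ y (by fun_prop) (by fun_prop)]
    rw [← sub_nonneg, (cfc_predicate h y).star_eq, hconj]
    -- `h s * s * h s - c * (h s * h s) = h s ^ 2 * (s - c)`, and `h` vanishes where `s ≤ c`.
    refine cfc_nonneg fun s _ ↦ ?_
    rcases le_or_gt s c with hs | hs
    · simp [h, max_eq_right (sub_nonpos.mpr hs)]
    · simp only [h, max_eq_left (sub_pos.mpr hs).le]
      nlinarith

section PositiveFunctional

variable {A : Type*} [CStarAlgebra A] {f : A →ₗ[ℂ] ℂ}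

lemma re_map_star_mul_self_pos (hpos : ∀ a, 0 ≤ f (star a * a))
    (hfaithful : ∀ a, f (star a * a) = 0 → a = 0) {b : A} (hb : b ≠ 0) :
    0 < (f (star b * b)).re :=
  (Complex.lt_def.1 <| (hpos b).lt_of_ne fun h ↦ hb (hfaithful b h.symm)).1

variable [PartialOrder A] [StarOrderedRing A]

lemma monotone_re_map (hpos : ∀ a, 0 ≤ f (star a * a)) : Monotone fun x ↦ (f x).re :=
  fun _ _ h ↦ Complex.re_le_re (monotone_of_map_star_mul_self_nonneg hpos h)

lemma norm_map_conjugate_eq_re (hpos : ∀ a, 0 ≤ f (star a * a)) {y : A} (hy : 0 ≤ y) (b : A) :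
    ‖f (star b * y * b)‖ = (f (star b * y * b)).re := by
  refine (Complex.re_eq_norm.2 ?_).symm
  simpa using monotone_of_map_star_mul_self_nonneg hpos (star_left_conjugate_nonneg hy b)

lemma norm_map_conjugate_div_le_norm (hpos : ∀ a, 0 ≤ f (star a * a)) {y : A} (hy : 0 ≤ y) {b : A}
    (hb : 0 < (f (star b * b)).re) : ‖f (star b * y * b)‖ / (f (star b * b)).re ≤ ‖y‖ := by
  rw [div_le_iff₀ hb, norm_map_conjugate_eq_re hpos hy]
  simpa using monotone_re_map hpos
    (CStarAlgebra.star_left_conjugate_le_norm_smul (a := b) hy.isSelfAdjoint)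

lemma le_norm_map_conjugate_div (hpos : ∀ a, 0 ≤ f (star a * a)) {y : A} (hy : 0 ≤ y) {b : A}
    (hb : 0 < (f (star b * b)).re) {c : ℝ} (hc : c • (star b * b) ≤ star b * y * b) :
    c ≤ ‖f (star b * y * b)‖ / (f (star b * b)).re := by
  rw [le_div_iff₀ hb, norm_map_conjugate_eq_re hpos hy]
  simpa [mul_comm] using monotone_re_map hpos hc

end PositiveFunctional

theorem stmt0_general {A : Type*} [NormedRing A] [StarRing A] [CStarRing A]
    [NormedAlgebra ℂ A] [CompleteSpace A] [StarModule ℂ A]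
    [PartialOrder A] [StarOrderedRing A] [Nontrivial A]
    (f : A →ₗ[ℂ] ℂ)
    (hpos : ∀ a : A, 0 ≤ f (star a * a))
    (hfaithful : ∀ a : A, f (star a * a) = 0 → a = 0) :
    ∀ y : A, 0 ≤ y →
      ‖y‖ = ⨆ b : {b : A // b ≠ 0},
        ‖f (star (b : A) * y * (b : A))‖ / (f (star (b : A) * (b : A))).re := by
  let _ : CStarAlgebra A := {}
  intro y hy
  have : Nonempty {b : A // b ≠ 0} := ⟨⟨1, one_ne_zero⟩⟩
  refine (ciSup_eq_of_forall_le_of_forall_lt_exists_gt (fun b ↦ ?_) fun w hw ↦ ?_).symm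
  · exact norm_map_conjugate_div_le_norm hpos hy (re_map_star_mul_self_pos hpos hfaithful b.2)
  · obtain ⟨c, hwc, hc⟩ := exists_between hw
    obtain ⟨b, hb, hcb⟩ := CStarAlgebra.exists_ne_zero_smul_star_mul_self_le_conjugate
      hy.isSelfAdjoint (CStarAlgebra.norm_mem_spectrum_of_nonneg hy) hc
    exact ⟨⟨b, hb⟩, hwc.trans_le <|
      le_norm_map_conjugate_div hpos hy (re_map_star_mul_self_pos hpos hfaithful hb) hcb⟩

/-- For a unital C*-algebra `A` with a faithful state `f`, the norm of every
positive element `y` equals `⨆ b ≠ 0, |f (b* y b)| / f (b* b)`. -/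
theorem stmt0 {A : Type*} [NormedRing A] [StarRing A] [CStarRing A]
    [NormedAlgebra ℂ A] [CompleteSpace A] [StarModule ℂ A] [NormOneClass A]
    [PartialOrder A] [StarOrderedRing A] [Nontrivial A]
    (f : A →ₗ[ℂ] ℂ)
    (hpos : ∀ a : A, 0 ≤ f (star a * a))
    (hone : f 1 = 1)
    (hfaithful : ∀ a : A, f (star a * a) = 0 → a = 0) :
    ∀ y : A, 0 ≤ y →
      ‖y‖ = ⨆ b : {b : A // b ≠ 0},
        ‖f (star (b : A) * y * (b : A))‖ / (f (star (b : A) * (b : A))).re :=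
  stmt0_general f hpos hfaithful
end

section
/- Let A be a C*-algebra with a faithful state f, and let E₁, E₂ be inner product A-modules. If V : E₁ → E₂ is an A-module map satisfying f(⟨x,y⟩_{E₁}) = f(⟨Vx,Vy⟩_{E₂}) for all x, y, then V is isometric with respect to the Hilbert module norms: ‖Vx‖_{E₂} = ‖x‖_{E₁} for all x ∈ E₁. -/
/-!
Compressing `x` by `b ∈ A` turns `⟨x, x⟩` into `b⋆ ⟨x, x⟩ b`, and `V` commutes with compressions,
so `f (b⋆ (⟨x, x⟩ - ⟨Vx, Vx⟩) b) = 0` for every `b`. Polarizing the sesquilinear form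
`(c, d) ↦ f (c⋆ a d)` gives `f (c⋆ a d) = 0` for all `c, d`; with `c = a`, `d = 1` faithfulness
forces `a = 0`. Thus `⟨Vx, Vx⟩ = ⟨x, x⟩` already in `A`, not only in norm.
-/

theorem LinearMap.eq_zero_of_apply_self_eq_zero {M : Type*} [AddCommGroup M] [Module ℂ M]
    (B : M →ₗ⋆[ℂ] M →ₗ[ℂ] ℂ) (h : ∀ x, B x x = 0) (x y : M) : B x y = 0 := by
  have hsum := h (x + y)
  have hrot := h (x + Complex.I • y)
  simp only [map_add, LinearMap.map_smulₛₗ, LinearMap.add_apply, LinearMap.smul_apply, smul_eq_mul,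
    Complex.conj_I, RingHom.id_apply, h] at hsum hrot
  linear_combination (hsum - Complex.I * hrot + (B x y - B y x) * Complex.I_sq) / 2

theorem inner_smul_smul_eq_star_mul_inner_mul {A E : Type*} [Mul A] [StarMul A]
    (smul : E → A → E) (ip : E → E → A)
    (hstar : ∀ x y, star (ip x y) = ip y x) (hsmul : ∀ x y b, ip x (smul y b) = ip x y * b)
    (x y : E) (b c : A) :
    ip (smul x b) (smul y c) = star b * ip x y * c := by
  rw [hsmul, ← hstar, hsmul, star_mul, hstar]

section FaithfulFunctional

variable {A : Type*} [Ring A] [StarRing A] [Algebra ℂ A] [StarModule ℂ A]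

def compressionForm (φ : A →ₗ[ℂ] ℂ) (a : A) : A →ₗ⋆[ℂ] A →ₗ[ℂ] ℂ :=
  LinearMap.mk₂'ₛₗ _ _ (fun c d => φ (star c * a * d))
    (fun c c' d => by rw [star_add, add_mul, add_mul, map_add])
    (fun z c d => by rw [star_smul, smul_mul_assoc, smul_mul_assoc, map_smul]; rfl)
    (fun c d d' => by rw [mul_add, map_add])
    (fun z c d => by rw [mul_smul_comm, map_smul]; rfl)

theorem eq_zero_of_forall_map_star_mul_mul_eq_zero {φ : A →ₗ[ℂ] ℂ}
    (hφ : ∀ a, φ (star a * a) = 0 → a = 0) {a : A} (h : ∀ b, φ (star b * a * b) = 0) :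
    a = 0 :=
  hφ a <| by
    simpa [compressionForm] using (compressionForm φ a).eq_zero_of_apply_self_eq_zero h a 1

theorem eq_of_forall_map_star_mul_mul_eq {φ : A →ₗ[ℂ] ℂ}
    (hφ : ∀ a, φ (star a * a) = 0 → a = 0) {p q : A}
    (h : ∀ b, φ (star b * p * b) = φ (star b * q * b)) : p = q :=
  sub_eq_zero.mp <| eq_zero_of_forall_map_star_mul_mul_eq_zero hφ fun b => by
    rw [mul_sub, sub_mul, map_sub, h, sub_self]

end FaithfulFunctional

open scoped ComplexOrder

theorem stmt2_general {A : Type*} [CStarAlgebra A]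
    (f : A →ₗ[ℂ] ℂ)
    (hfaithful : ∀ a : A, f (star a * a) = 0 → a = 0)
    {E₁ E₂ : Type*}
    (smul₁ : E₁ → A → E₁) (smul₂ : E₂ → A → E₂)
    (ip₁ : E₁ → E₁ → A) (ip₂ : E₂ → E₂ → A)
    -- the inner products are positive, conjugate-symmetric, additive and `A`-sesquilinear
    (hip₁star : ∀ x y, star (ip₁ x y) = ip₁ y x) (hip₂star : ∀ x y, star (ip₂ x y) = ip₂ y x)
    (hip₁smul : ∀ x y b, ip₁ x (smul₁ y b) = ip₁ x y * b)
    (hip₂smul : ∀ x y b, ip₂ x (smul₂ y b) = ip₂ x y * b)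
    (V : E₁ → E₂)
    (hVmod : ∀ x b, V (smul₁ x b) = smul₂ (V x) b)
    (h2iso : ∀ x y, f (ip₁ x y) = f (ip₂ (V x) (V y))) :
    ∀ x, ‖ip₂ (V x) (V x)‖ = ‖ip₁ x x‖ := by
  intro x
  congr 1
  refine eq_of_forall_map_star_mul_mul_eq hfaithful fun b => ?_
  rw [← inner_smul_smul_eq_star_mul_inner_mul smul₂ ip₂ hip₂star hip₂smul,
    ← inner_smul_smul_eq_star_mul_inner_mul smul₁ ip₁ hip₁star hip₁smul, ← hVmod, h2iso]

/-- an `A`-module map between inner product `A`-modules which is a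
2-isometry with respect to a faithful state `f` is isometric for the Hilbert module
norms, i.e. `‖⟨Vx, Vx⟩‖ = ‖⟨x, x⟩‖` for all `x`. -/
theorem stmt2 {A : Type*} [CStarAlgebra A] [PartialOrder A] [StarOrderedRing A]
    (f : A →ₗ[ℂ] ℂ)
    (hpos : ∀ a : A, 0 ≤ f (star a * a))
    (hone : f 1 = 1)
    (hfaithful : ∀ a : A, f (star a * a) = 0 → a = 0)
    {E₁ E₂ : Type*} [AddCommGroup E₁] [AddCommGroup E₂]
    (smul₁ : E₁ → A → E₁) (smul₂ : E₂ → A → E₂)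
    (ip₁ : E₁ → E₁ → A) (ip₂ : E₂ → E₂ → A)
    -- the inner products are positive, conjugate-symmetric, additive and `A`-sesquilinear
    (hip₁pos : ∀ x, 0 ≤ ip₁ x x) (hip₂pos : ∀ x, 0 ≤ ip₂ x x)
    (hip₁star : ∀ x y, star (ip₁ x y) = ip₁ y x) (hip₂star : ∀ x y, star (ip₂ x y) = ip₂ y x)
    (hip₁add : ∀ x y z, ip₁ x (y + z) = ip₁ x y + ip₁ x z)
    (hip₂add : ∀ x y z, ip₂ x (y + z) = ip₂ x y + ip₂ x z)
    (hip₁smul : ∀ x y b, ip₁ x (smul₁ y b) = ip₁ x y * b)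
    (hip₂smul : ∀ x y b, ip₂ x (smul₂ y b) = ip₂ x y * b)
    (V : E₁ → E₂)
    (hVadd : ∀ x y, V (x + y) = V x + V y)
    (hVmod : ∀ x b, V (smul₁ x b) = smul₂ (V x) b)
    (h2iso : ∀ x y, f (ip₁ x y) = f (ip₂ (V x) (V y))) :
    ∀ x, ‖ip₂ (V x) (V x)‖ = ‖ip₁ x x‖ :=
  stmt2_general f hfaithful smul₁ smul₂ ip₁ ip₂ hip₁star hip₂star hip₁smul hip₂smul V hVmod h2iso
end

section
/- A surjective A-linear isometry F : E₁ → E₂ between Hilbert C*-modules over a C*-algebra A preserves the A-valued inner products: ⟨Fx, Fy⟩_{E₂} = ⟨x, y⟩_{E₁} for all x, y ∈ E₁, i.e., F is a unitary adjointable operator. -/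
/-! Isometry and `A`-linearity of `F` give `‖⟨F(xb), F(xb)⟩‖ = ‖⟨xb, xb⟩‖`, that is
`‖b* ⟨Fx, Fx⟩ b‖ = ‖b* ⟨x, x⟩ b‖` for every `b ∈ A`. In a C*-algebra a positive `q` with
`‖b* q b‖ ≤ ‖b* p b‖` for all `b` satisfies `q ≤ p` (conjugate by `(p + ε)^{-1/2}` and let
`ε → 0`), so `⟨Fx, Fx⟩ = ⟨x, x⟩`. Polarization then recovers the whole inner product: the
difference `d` of two hermitian pairings that agree on the diagonal satisfies
`d b + b* d* = 0` for all `b`, and `b = d*` gives `d d* = 0`. -/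

section Order

open CFC Filter Topology

variable {A : Type*} [CStarAlgebra A] [PartialOrder A] [StarOrderedRing A]

theorem CStarAlgebra.le_of_forall_norm_conjugate_le_of_le {p q b : A}
    (hp : 0 ≤ p) (hq : 0 ≤ q) (hpb : p ≤ b) (hb : IsStrictlyPositive b)
    (h : ∀ c : A, ‖star c * q * c‖ ≤ ‖star c * p * c‖) : q ≤ b := by
  set c := b ^ (-(1 / 2) : ℝ)
  set s := b ^ (1 / 2 : ℝ)
  have hc : IsSelfAdjoint c := .of_nonneg rpow_nonneg
  have hsc : s * c = 1 := by
    rw [← rpow_add hb.isUnit]; norm_num [rpow_zero b]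
  have hcs : c * s = 1 := by
    rw [← rpow_add hb.isUnit]; norm_num [rpow_zero b]
  have hss : s * s = b := by
    rw [← rpow_add hb.isUnit]; norm_num [rpow_one b]
  have hcpc : c * p * c ≤ 1 :=
    conjugate_rpow_neg_one_half b ▸ hc.conjugate_le_conjugate hpb
  have hcqc : c * q * c ≤ 1 := by
    rw [← CStarAlgebra.norm_le_one_iff_of_nonneg _ (conjugate_nonneg_of_nonneg hq rpow_nonneg)]
    calc ‖c * q * c‖ ≤ ‖c * p * c‖ := by simpa only [hc.star_eq] using h c
      _ ≤ 1 := (CStarAlgebra.norm_le_one_iff_of_nonneg _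
          (conjugate_nonneg_of_nonneg hp rpow_nonneg)).mpr hcpc
  calc q = s * c * q * (c * s) := by rw [hsc, hcs, one_mul, mul_one]
    _ = s * (c * q * c) * s := by simp only [mul_assoc]
    _ ≤ s * 1 * s := conjugate_le_conjugate_of_nonneg hcqc rpow_nonneg
    _ = b := by rw [mul_one, hss]

theorem CStarAlgebra.le_of_forall_norm_conjugate_le {p q : A} (hp : 0 ≤ p) (hq : 0 ≤ q)
    (h : ∀ c : A, ‖star c * q * c‖ ≤ ‖star c * p * c‖) : q ≤ p := by
  have hε : ∀ ε : ℝ, 0 < ε → q ≤ p + algebraMap ℝ A ε := fun ε hε =>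
    let hεA := isStrictlyPositive_algebraMap (A := A) hε
    le_of_forall_norm_conjugate_le_of_le hp hq (le_add_of_nonneg_right hεA.nonneg)
      (.nonneg_add hp hεA) h
  have hlim : Tendsto (fun ε : ℝ => p + algebraMap ℝ A ε) (𝓝[>] 0) (𝓝 p) := by
    simpa only [map_zero, add_zero] using
      (((continuous_algebraMap ℝ A).tendsto 0).const_add p).mono_left nhdsWithin_le_nhds
  exact ge_of_tendsto hlim (eventually_mem_nhdsWithin.mono hε)

end Order

structure IsHermitianPairing {A E : Type*} [Mul A] [Add A] [Star A] [Add E]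
    (smul : E → A → E) (ip : E → E → A) : Prop where
  star_apply : ∀ x y, star (ip x y) = ip y x
  add_right : ∀ x y z, ip x (y + z) = ip x y + ip x z
  smul_right : ∀ x y b, ip x (smul y b) = ip x y * b

namespace IsHermitianPairing

section StarRing

variable {A E : Type*} [NonUnitalRing A] [StarRing A] [Add E]
  {smul : E → A → E} {ip : E → E → A}

theorem add_left (h : IsHermitianPairing smul ip) (x y z : E) :
    ip (x + y) z = ip x z + ip y z := by
  rw [← h.star_apply, h.add_right, star_add, h.star_apply, h.star_apply]

theorem smul_left (h : IsHermitianPairing smul ip) (x y : E) (b : A) :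
    ip (smul x b) y = star b * ip x y := by
  rw [← h.star_apply, h.smul_right, star_mul, h.star_apply]

theorem apply_smul_self (h : IsHermitianPairing smul ip) (x : E) (b : A) :
    ip (smul x b) (smul x b) = star b * ip x x * b := by
  rw [h.smul_left, h.smul_right, mul_assoc]

theorem apply_add_smul_self (h : IsHermitianPairing smul ip) (x y : E) (b : A) :
    ip (x + smul y b) (x + smul y b)
      = ip x x + ip x y * b + star b * ip y x + star b * ip y y * b := by
  rw [h.add_right, h.add_left, h.add_left, h.smul_left, h.smul_left, h.smul_right,
    h.smul_right, mul_assoc]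
  abel

theorem comp {E' G : Type*} [Add E'] [FunLike G E' E] [AddHomClass G E' E]
    {smul' : E' → A → E'} (h : IsHermitianPairing smul ip) (F : G)
    (hF : ∀ x b, F (smul' x b) = smul (F x) b) :
    IsHermitianPairing smul' (fun x y => ip (F x) (F y)) where
  star_apply x y := h.star_apply (F x) (F y)
  add_right x y z := by simp only [map_add, h.add_right]
  smul_right x y b := by simp only [hF, h.smul_right]

end StarRing

theorem eq_of_apply_self_eq {A E : Type*} [NonUnitalCStarAlgebra A] [Add E]
    {smul : E → A → E} {P Q : E → E → A} (hP : IsHermitianPairing smul P)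
    (hQ : IsHermitianPairing smul Q) (h : ∀ x, P x x = Q x x) (x y : E) : P x y = Q x y := by
  set d := P x y - Q x y with hd
  have hstar_d : star d = P y x - Q y x := by
    rw [hd, star_sub, hP.star_apply, hQ.star_apply]
  have hcross : ∀ b, d * b + star b * star d = 0 := by
    intro b
    have hb := h (x + smul y b)
    rw [hP.apply_add_smul_self, hQ.apply_add_smul_self, h x, h y] at hb
    rw [hd, hstar_d, sub_mul, mul_sub]
    linear_combination (norm := abel_nf) hb
  have hdd : (2 : ℂ) • (d * star d) = 0 := by
    simpa only [two_smul, star_star] using hcross (star d)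
  exact sub_eq_zero.mp <| CStarRing.mul_star_self_eq_zero_iff d |>.mp <|
    (smul_eq_zero.mp hdd).resolve_left two_ne_zero

theorem apply_self_eq_of_norm_eq {A E : Type*} [CStarAlgebra A] [PartialOrder A]
    [StarOrderedRing A] [Add E] {smul : E → A → E} {P Q : E → E → A}
    (hP : IsHermitianPairing smul P) (hQ : IsHermitianPairing smul Q)
    (hP₀ : ∀ x, 0 ≤ P x x) (hQ₀ : ∀ x, 0 ≤ Q x x)
    (h : ∀ x, ‖P x x‖ = ‖Q x x‖) (x : E) : P x x = Q x x := by
  have hconj : ∀ b, ‖star b * P x x * b‖ = ‖star b * Q x x * b‖ := fun b => by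
    rw [← hP.apply_smul_self, ← hQ.apply_smul_self, h]
  exact le_antisymm
    (CStarAlgebra.le_of_forall_norm_conjugate_le (hQ₀ x) (hP₀ x) fun b => (hconj b).le)
    (CStarAlgebra.le_of_forall_norm_conjugate_le (hP₀ x) (hQ₀ x) fun b => (hconj b).ge)

end IsHermitianPairing

theorem stmt3_general {A : Type*} [CStarAlgebra A] [PartialOrder A] [StarOrderedRing A]
    {E₁ E₂ : Type*} [NormedAddCommGroup E₁] [NormedAddCommGroup E₂]
    [Module ℂ E₁] [Module ℂ E₂]
    (smul₁ : E₁ → A → E₁) (smul₂ : E₂ → A → E₂)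
    (ip₁ : E₁ → E₁ → A) (ip₂ : E₂ → E₂ → A)
    -- the inner products are positive definite, conjugate-symmetric, additive,
    -- and `A`-sesquilinear
    (hip₁pos : ∀ x, 0 ≤ ip₁ x x) (hip₂pos : ∀ x, 0 ≤ ip₂ x x)
    (hip₁star : ∀ x y, star (ip₁ x y) = ip₁ y x) (hip₂star : ∀ x y, star (ip₂ x y) = ip₂ y x)
    (hip₁add : ∀ x y z, ip₁ x (y + z) = ip₁ x y + ip₁ x z)
    (hip₂add : ∀ x y z, ip₂ x (y + z) = ip₂ x y + ip₂ x z)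
    (hip₁smul : ∀ x y b, ip₁ x (smul₁ y b) = ip₁ x y * b)
    (hip₂smul : ∀ x y b, ip₂ x (smul₂ y b) = ip₂ x y * b)
    -- the norms on `E₁` and `E₂` are the Hilbert module norms
    (hnorm₁ : ∀ x : E₁, ‖x‖ = Real.sqrt ‖ip₁ x x‖)
    (hnorm₂ : ∀ x : E₂, ‖x‖ = Real.sqrt ‖ip₂ x x‖)
    (F : E₁ →ₗ[ℂ] E₂)
    (hFmod : ∀ x b, F (smul₁ x b) = smul₂ (F x) b)
    (hFisom : ∀ x : E₁, ‖F x‖ = ‖x‖) :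
    ∀ x y : E₁, ip₂ (F x) (F y) = ip₁ x y := by
  have h₁ : IsHermitianPairing smul₁ ip₁ := ⟨hip₁star, hip₁add, hip₁smul⟩
  have hF : IsHermitianPairing smul₁ (fun x y => ip₂ (F x) (F y)) :=
    IsHermitianPairing.comp ⟨hip₂star, hip₂add, hip₂smul⟩ F hFmod
  have hnorm : ∀ x, ‖ip₂ (F x) (F x)‖ = ‖ip₁ x x‖ := fun x =>
    (Real.sqrt_inj (norm_nonneg _) (norm_nonneg _)).mp (by rw [← hnorm₁, ← hnorm₂, hFisom])
  exact hF.eq_of_apply_self_eq h₁ <|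
    hF.apply_self_eq_of_norm_eq h₁ (fun x => hip₂pos (F x)) hip₁pos hnorm

/-- a surjective `A`-linear isometry between Hilbert C*-modules over a
C*-algebra `A` preserves the `A`-valued inner products (so it is a unitary). -/
theorem stmt3 {A : Type*} [CStarAlgebra A] [PartialOrder A] [StarOrderedRing A]
    {E₁ E₂ : Type*} [NormedAddCommGroup E₁] [NormedAddCommGroup E₂]
    [Module ℂ E₁] [Module ℂ E₂] [CompleteSpace E₁] [CompleteSpace E₂]
    (smul₁ : E₁ → A → E₁) (smul₂ : E₂ → A → E₂)
    (ip₁ : E₁ → E₁ → A) (ip₂ : E₂ → E₂ → A)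
    -- the inner products are positive definite, conjugate-symmetric, additive,
    -- and `A`-sesquilinear
    (hip₁pos : ∀ x, 0 ≤ ip₁ x x) (hip₂pos : ∀ x, 0 ≤ ip₂ x x)
    (hip₁def : ∀ x, ip₁ x x = 0 → x = 0) (hip₂def : ∀ x, ip₂ x x = 0 → x = 0)
    (hip₁star : ∀ x y, star (ip₁ x y) = ip₁ y x) (hip₂star : ∀ x y, star (ip₂ x y) = ip₂ y x)
    (hip₁add : ∀ x y z, ip₁ x (y + z) = ip₁ x y + ip₁ x z)
    (hip₂add : ∀ x y z, ip₂ x (y + z) = ip₂ x y + ip₂ x z)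
    (hip₁smul : ∀ x y b, ip₁ x (smul₁ y b) = ip₁ x y * b)
    (hip₂smul : ∀ x y b, ip₂ x (smul₂ y b) = ip₂ x y * b)
    -- the norms on `E₁` and `E₂` are the Hilbert module norms
    (hnorm₁ : ∀ x : E₁, ‖x‖ = Real.sqrt ‖ip₁ x x‖)
    (hnorm₂ : ∀ x : E₂, ‖x‖ = Real.sqrt ‖ip₂ x x‖)
    (F : E₁ →ₗ[ℂ] E₂)
    (hFsurj : Function.Surjective F)
    (hFmod : ∀ x b, F (smul₁ x b) = smul₂ (F x) b)
    (hFisom : ∀ x : E₁, ‖F x‖ = ‖x‖) :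
    ∀ x y : E₁, ip₂ (F x) (F y) = ip₁ x y :=
  stmt3_general smul₁ smul₂ ip₁ ip₂ hip₁pos hip₂pos hip₁star hip₂star hip₁add hip₂add hip₁smul
    hip₂smul hnorm₁ hnorm₂ F hFmod hFisom
end

section
/- Cuntz subequivalence can be checked via cut-downs: for positive elements a, b of a C*-algebra, a ≾ b if and only if (a − ε)₊ ≾ b for every ε > 0. -/
/-!
`a ≾ b` says exactly that `a` lies in the norm closure of `{r* b r}`. This closed set is stable
under `x ↦ c* x c`, and `(a - ε)₊ = c* a c` for `c = g(a)`, `g(t) = ((t - ε)₊ / max t ε)^{1/2}`,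
which gives the forward direction. Conversely `‖(a - ε)₊ - a‖ ≤ ε`, so `a` is a limit of
cut-downs, all of which lie in the closed set.
-/

/-- Cuntz subequivalence: `a ≾ b` iff there is a sequence `rₙ` with `rₙ* b rₙ → a` in norm. -/
def CuntzSubequiv {A : Type*} [NormedRing A] [StarRing A] (a b : A) : Prop :=
  ∃ r : ℕ → A, Filter.Tendsto (fun n => star (r n) * b * r n) Filter.atTop (nhds a)

open Filter Topology

section NormedRing

variable {A : Type*} [NormedRing A] [StarRing A]

theorem cuntzSubequiv_iff_mem_closure {a b : A} :
    CuntzSubequiv a b ↔ a ∈ closure (Set.range fun r : A => star r * b * r) := by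
  rw [mem_closure_iff_seq_limit]
  constructor
  · rintro ⟨r, hr⟩
    exact ⟨_, fun n => ⟨r n, rfl⟩, hr⟩
  · rintro ⟨x, hx, hlim⟩
    choose r hr using hx
    exact ⟨r, funext hr ▸ hlim⟩

theorem CuntzSubequiv.star_mul_mul {a b : A} (h : CuntzSubequiv a b) (c : A) :
    CuntzSubequiv (star c * a * c) b := by
  obtain ⟨r, hr⟩ := h
  refine ⟨fun n => r n * c, ?_⟩
  have hconj : Continuous fun x : A => star c * x * c := by fun_prop
  convert (hconj.tendsto a).comp hr using 2 with n
  simp only [Function.comp_apply, star_mul, mul_assoc]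

theorem CuntzSubequiv.of_tendsto {ι : Type*} {l : Filter ι} [l.NeBot] {x : ι → A} {a b : A}
    (hx : Tendsto x l (𝓝 a)) (h : ∀ᶠ i in l, CuntzSubequiv (x i) b) : CuntzSubequiv a b := by
  simp only [cuntzSubequiv_iff_mem_closure] at h ⊢
  exact isClosed_closure.mem_of_tendsto hx h

end NormedRing

theorem exists_star_mul_mul_eq_cfc_cutDown {A : Type*} [CStarAlgebra A] {a : A}
    (ha : IsSelfAdjoint a) {ε : ℝ} (hε : 0 < ε) :
    ∃ c : A, star c * a * c = cfc (fun x : ℝ => max (x - ε) 0) a := by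
  set g : ℝ → ℝ := fun x => √(max (x - ε) 0 / max x ε)
  have hmax : ∀ x, 0 < max x ε := fun x => lt_max_of_lt_right hε
  have hg : Continuous g :=
    (((continuous_id.sub continuous_const).max continuous_const).div
      (continuous_id.max continuous_const) fun x => (hmax x).ne').sqrt
  have hgx : ∀ x, g x * x * g x = max (x - ε) 0 := by
    intro x
    rw [mul_right_comm, Real.mul_self_sqrt (div_nonneg (le_max_right _ _) (hmax x).le)]
    rcases le_total x ε with h | h
    · rw [max_eq_right (sub_nonpos.2 h), zero_div, zero_mul]
    · rw [max_eq_left (sub_nonneg.2 h), max_eq_left h, div_mul_cancel₀ _ (by linarith)]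
  refine ⟨cfc g a, ?_⟩
  rw [IsSelfAdjoint.cfc.star_eq, ← cfc_congr fun x _ => hgx x,
    cfc_mul (fun x => g x * x) g a (hg.mul continuous_id).continuousOn hg.continuousOn,
    cfc_mul g (fun x => x) a hg.continuousOn continuousOn_id, cfc_id' ℝ a]

section CutDown

variable {A : Type*} [CStarAlgebra A] [PartialOrder A] [StarOrderedRing A]

theorem norm_cfc_cutDown_sub_le {a : A} (ha : 0 ≤ a) {ε : ℝ} (hε : 0 ≤ ε) :
    ‖cfc (fun x : ℝ => max (x - ε) 0) a - a‖ ≤ ε := by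
  have hsub :
      cfc (fun x : ℝ => max (x - ε) 0 - x) a = cfc (fun x : ℝ => max (x - ε) 0) a - a := by
    rw [cfc_sub (fun x : ℝ => max (x - ε) 0) (fun x => x) a, cfc_id' ℝ a]
  rw [← hsub]
  refine norm_cfc_le hε fun x hx => ?_
  have hx0 : 0 ≤ x := spectrum_nonneg_of_nonneg ha hx
  rw [Real.norm_eq_abs, abs_le]
  exact ⟨by linarith [le_max_left (x - ε) 0], by linarith [max_le (by linarith : x - ε ≤ x) hx0]⟩

theorem tendsto_cfc_cutDown {a : A} (ha : 0 ≤ a) :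
    Tendsto (fun ε : ℝ => cfc (fun x : ℝ => max (x - ε) 0) a) (𝓝[>] 0) (𝓝 a) := by
  rw [tendsto_iff_norm_sub_tendsto_zero]
  exact squeeze_zero' (Eventually.of_forall fun _ => norm_nonneg _)
    (eventually_nhdsWithin_of_forall fun ε hε => norm_cfc_cutDown_sub_le ha hε.le)
    (tendsto_nhdsWithin_of_tendsto_nhds tendsto_id)

end CutDown

theorem stmt6_general {A : Type*} [CStarAlgebra A] [PartialOrder A] [StarOrderedRing A]
    (a b : A) (ha : 0 ≤ a) :
    CuntzSubequiv a b ↔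
      ∀ ε : ℝ, 0 < ε → CuntzSubequiv (cfc (fun x : ℝ => max (x - ε) 0) a) b := by
  refine ⟨fun h ε hε => ?_, fun h => ?_⟩
  · obtain ⟨c, hc⟩ := exists_star_mul_mul_eq_cfc_cutDown ha.isSelfAdjoint hε
    exact hc ▸ h.star_mul_mul c
  · exact CuntzSubequiv.of_tendsto (tendsto_cfc_cutDown ha) (eventually_nhdsWithin_of_forall h)

/-- Rørdam's characterization: for positive `a b`,
`a ≾ b` iff `(a - ε)₊ ≾ b` for every `ε > 0`. -/
theorem stmt6 {A : Type*} [CStarAlgebra A] [PartialOrder A] [StarOrderedRing A]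
    (a b : A) (ha : 0 ≤ a) (hb : 0 ≤ b) :
    CuntzSubequiv a b ↔
      ∀ ε : ℝ, 0 < ε → CuntzSubequiv (cfc (fun x : ℝ => max (x - ε) 0) a) b :=
  stmt6_general a b ha
end
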